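/- Let K be a field, L a finite-dimensional Lie algebra over K, μ ≥ 1, and F : ℤ → (K-subspaces of L) satisfying: F(j) = L for all j ≤ −μ; F(j+1) ⊆ F(j) for all j ≤ −1; ⁅F(j), F(k)⁆ ⊆ F(j+k) for all j, k ≤ 0; F(j−1) = F(j) + ⁅F(−1), F(j)⁆ for all j ≤ −1; and F(j) = {X ∈ F(0) : ⁅X, Z⁆ ∈ F(j−1) for all Z ∈ F(−1)} for every j ≥ 1. If the only Lie ideal of L contained in F(0) is the zero ideal, then there exists ℓ ≥ 1 with F(ℓ) = 0. -/

import Mathlib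

/-!
For `n ≥ 0` the prolongation rule makes `n ↦ F n` decreasing, so in finite dimension some
`V = F (n + 1)` equals `F n`; the rule then says `⁅V, F (-1)⁆ ⊆ V`. The elements of `L` whose
adjoint action preserves `V` form a Lie subalgebra, and by the generation rule `F (-1)` generates
a Lie subalgebra containing `F (-μ) = L`. Hence `V` is an ideal inside `F 0`, so `V = 0`.
-/

/-- The subspace spanned by all brackets of elements of `A` with elements of `B`. -/
def bracketSpan (K : Type*) {L : Type*} [Field K] [LieRing L] [LieAlgebra K L]
    (A B : Submodule K L) : Submodule K L :=
  Submodule.span K {z | ∃ x ∈ A, ∃ y ∈ B, z = ⁅x, y⁆}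

def Submodule.lieStabilizer {R L : Type*} [CommRing R] [LieRing L] [LieAlgebra R L]
    (V : Submodule R L) : LieSubalgebra R L where
  carrier := {y | ∀ x ∈ V, ⁅y, x⁆ ∈ V}
  zero_mem' := by simp
  add_mem' hy hy' x hx := by rw [add_lie]; exact add_mem (hy x hx) (hy' x hx)
  smul_mem' c y hy x hx := by rw [smul_lie]; exact V.smul_mem c (hy x hx)
  lie_mem' {y y'} hy hy' x hx := by
    rw [lie_lie]; exact sub_mem (hy _ (hy' x hx)) (hy' _ (hy x hx))

theorem Submodule.exists_succ_eq_of_antitone {R M : Type*} [Ring R] [AddCommGroup M] [Module R M]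
    [IsArtinian R M] {f : ℕ → Submodule R M} (hf : Antitone f) : ∃ n, f (n + 1) = f n := by
  obtain ⟨n, hn⟩ := IsArtinian.monotone_stabilizes ⟨fun n => OrderDual.toDual (f n), hf⟩
  exact ⟨n, (hn (n + 1) n.le_succ).symm⟩

section Filtration

variable {K L : Type*} [Field K] [LieRing L] [LieAlgebra K L]

theorem bracketSpan_le_lieSubalgebra {A B : Submodule K L} {S : LieSubalgebra K L}
    (hA : A ≤ S.toSubmodule) (hB : B ≤ S.toSubmodule) : bracketSpan K A B ≤ S.toSubmodule :=
  Submodule.span_le.2 fun _ ⟨_, hx, _, hy, hz⟩ => hz ▸ S.lie_mem (hA hx) (hB hy)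

theorem le_lieSpan_of_generated {F : ℤ → Submodule K L}
    (h_gen : ∀ j : ℤ, j ≤ -1 → F (j - 1) = F j ⊔ bracketSpan K (F (-1)) (F j)) :
    ∀ j : ℤ, j ≤ -1 → F j ≤ (LieSubalgebra.lieSpan K L (F (-1))).toSubmodule := by
  have h_base : F (-1) ≤ (LieSubalgebra.lieSpan K L (F (-1))).toSubmodule :=
    LieSubalgebra.subset_lieSpan
  refine Int.leInductionDown h_base fun j hj ih => ?_
  rw [h_gen j hj]
  exact sup_le ih (bracketSpan_le_lieSubalgebra h_base ih)

theorem antitone_of_prolongation {F : ℤ → Submodule K L}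
    (h_prol : ∀ j : ℤ, 1 ≤ j → ∀ x : L,
      x ∈ F j ↔ (x ∈ F 0 ∧ ∀ z ∈ F (-1), ⁅x, z⁆ ∈ F (j - 1))) :
    Antitone fun n : ℕ => F n := by
  refine antitone_nat_of_succ_le fun n => ?_
  induction n with
  | zero => exact fun x hx => ((h_prol 1 le_rfl x).1 (by simpa using hx)).1
  | succ n ih =>
    intro x hx
    obtain ⟨hx0, hxz⟩ := (h_prol (n + 1 + 1) (by omega) x).1 (by simpa using hx)
    refine (h_prol (n + 1) (by omega) x).2 ⟨hx0, fun z hz => ?_⟩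
    simpa using ih (by simpa [add_sub_assoc] using hxz z hz)

end Filtration

theorem filtration_terminates_of_effective_general
    (K L : Type*) [Field K] [LieRing L] [LieAlgebra K L] [FiniteDimensional K L]
    (μ : ℕ) (hμ : 1 ≤ μ) (F : ℤ → Submodule K L)
    (h_deep : ∀ j : ℤ, j ≤ -(μ : ℤ) → F j = ⊤)
    (h_gen : ∀ j : ℤ, j ≤ -1 → F (j - 1) = F j ⊔ bracketSpan K (F (-1)) (F j))
    (h_prol : ∀ j : ℤ, 1 ≤ j → ∀ x : L,
      x ∈ F j ↔ (x ∈ F 0 ∧ ∀ z ∈ F (-1), ⁅x, z⁆ ∈ F (j - 1)))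
    (h_eff : ∀ I : LieIdeal K L, (I : Submodule K L) ≤ F 0 → I = ⊥) :
    ∃ ℓ : ℤ, 1 ≤ ℓ ∧ F ℓ = ⊥ := by
  obtain ⟨n, h_stable⟩ :=
    Submodule.exists_succ_eq_of_antitone (antitone_of_prolongation h_prol)
  replace h_stable : F (n + 1) = F n := by exact_mod_cast h_stable
  have h_mem_succ (x : L) (hx : x ∈ F (n + 1)) := (h_prol (n + 1) (by omega) x).1 hx
  have h_neg_le : F (-1) ≤ (F (n + 1)).lieStabilizer.toSubmodule := fun z hz x hx => by
    rw [← lie_skew, neg_mem_iff, h_stable]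
    simpa using (h_mem_succ x hx).2 z hz
  have h_top : (F (n + 1)).lieStabilizer = ⊤ := by
    rw [eq_top_iff, ← LieSubalgebra.toSubmodule_le_toSubmodule, LieSubalgebra.top_toSubmodule,
      ← h_deep _ le_rfl]
    exact (le_lieSpan_of_generated h_gen _ (by omega)).trans
      (LieSubalgebra.lieSpan_le.2 h_neg_le)
  have h_ideal (y : L) : y ∈ (F (n + 1)).lieStabilizer := h_top ▸ LieSubalgebra.mem_top y
  let I : LieIdeal K L := { F (n + 1) with lie_mem := fun {y} {x} hx => h_ideal y x hx }
  refine ⟨n + 1, by omega, ?_⟩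
  simpa [I] using congrArg LieSubmodule.toSubmodule (h_eff I fun x hx => (h_mem_succ x hx).1)

theorem filtration_terminates_of_effective
    (K L : Type*) [Field K] [LieRing L] [LieAlgebra K L] [FiniteDimensional K L]
    (μ : ℕ) (hμ : 1 ≤ μ) (F : ℤ → Submodule K L)
    (h_deep : ∀ j : ℤ, j ≤ -(μ : ℤ) → F j = ⊤)
    (h_mono : ∀ j : ℤ, j ≤ -1 → F (j + 1) ≤ F j)
    (h_neg : ∀ j k : ℤ, j ≤ 0 → k ≤ 0 → bracketSpan K (F j) (F k) ≤ F (j + k))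
    (h_gen : ∀ j : ℤ, j ≤ -1 → F (j - 1) = F j ⊔ bracketSpan K (F (-1)) (F j))
    (h_prol : ∀ j : ℤ, 1 ≤ j → ∀ x : L,
      x ∈ F j ↔ (x ∈ F 0 ∧ ∀ z ∈ F (-1), ⁅x, z⁆ ∈ F (j - 1)))
    (h_eff : ∀ I : LieIdeal K L, (I : Submodule K L) ≤ F 0 → I = ⊥) :
    ∃ ℓ : ℤ, 1 ≤ ℓ ∧ F ℓ = ⊥ :=
  filtration_terminates_of_effective_general K L μ hμ F h_deep h_gen h_prol h_eff
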